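/- arXiv:2308.07031 — 5 statements merged into one kernel-verified Lean document; each statement's English description precedes it below -/
import Mathlib

section
/- Let 𝒯 = (T_t)_{t≥0} be a C₀-semigroup on a separable metrizable topological vector space X and let x ∈ X be a hypercyclic vector for 𝒯. Then for every nonempty open set U ⊆ X, the set J_U = {τ > 0 : ∃ n ∈ ℕ, T_{nτ} x ∈ U} is open and dense in (0, ∞). -/
/-!
Openness is continuity of `τ ↦ T (n * τ) x`. For density, the whole point is that the orbit of a
hypercyclic vector visits `U` at arbitrarily large times: since every large `t` is `n * τ` for
some `τ` in a given interval `(a, b) ⊆ (0, ∞)`, such a `τ` then lies in `J_U`.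

If the visits to `U` stopped after time `M`, then, the orbit minus the point `T 0 x` being still
dense, the range of `T M` would lie in the closure of `{T t x | t > M}`, which misses `U`. So the
closure `Y` of that range would be a proper closed subspace, hence with dense complement. As the
orbit is contained in the compact arc `{T t x | t ∈ [0, M]}` together with `Y`, the arc would be
all of `X`; but a nontrivial Hausdorff vector space is not compact.
-/

open Filter Set Topology

theorem Submodule.dense_compl {𝕜 E : Type*} [NontriviallyNormedField 𝕜] [AddCommGroup E]
    [Module 𝕜 E] [TopologicalSpace E] [ContinuousAdd E] [ContinuousSMul 𝕜 E]
    {Y : Submodule 𝕜 E} (hY : Y ≠ ⊤) : Dense (Y : Set E)ᶜ :=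
  interior_eq_empty_iff_dense_compl.1 <| not_nonempty_iff_eq_empty.1 fun h ↦
    hY (Y.eq_top_of_nonempty_interior' h)

theorem noncompactSpace_of_nontrivial (𝕜 : Type*) {E : Type*} [NontriviallyNormedField 𝕜]
    [CompleteSpace 𝕜] [AddCommGroup E] [Module 𝕜 E] [TopologicalSpace E]
    [IsTopologicalAddGroup E] [ContinuousSMul 𝕜 E] [T2Space E] [Nontrivial E] :
    NoncompactSpace E :=
  let ⟨_, hv⟩ := exists_ne (0 : E)
  (isClosedEmbedding_smul_left (𝕜 := 𝕜) hv).noncompactSpace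

theorem dense_image_Ioi_of_dense_image_Ici {X : Type*} [TopologicalSpace X] [T1Space X]
    {φ : ℝ → X} [NeBot (𝓝[≠] (φ 0))] (hφ : Dense (φ '' Ici 0)) : Dense (φ '' Ioi 0) :=
  (hφ.sdiff_singleton (φ 0)).mono <| by
    rintro _ ⟨⟨t, ht, rfl⟩, hne⟩
    exact ⟨t, (show (0 : ℝ) ≤ t from ht).lt_of_ne (by rintro rfl; exact hne rfl), rfl⟩

theorem Ioi_subset_closure_of_inter_Ioo_nonempty {s : Set ℝ}
    (hs : ∀ a b, 0 < a → a < b → (s ∩ Ioo a b).Nonempty) : Ioi 0 ⊆ closure s := by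
  intro τ hτ
  rw [mem_closure_iff_nhds]
  intro o ho
  obtain ⟨l, u, ⟨hl, hu⟩, hsub⟩ := mem_nhds_iff_exists_Ioo_subset.1 ho
  obtain ⟨σ, hσs, hσ⟩ := hs τ u hτ hu
  exact ⟨σ, hsub ⟨hl.trans hσ.1, hσ.2⟩, hσs⟩

theorem eventually_exists_mem_Ioo_nat_mul_eq {a b : ℝ} (ha : 0 < a) (hab : a < b) :
    ∀ᶠ t in atTop, ∃ τ ∈ Ioo a b, ∃ n : ℕ, n * τ = t := by
  filter_upwards [eventually_gt_atTop (a * b / (b - a)), eventually_gt_atTop 0] with t ht ht0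
  have hb : 0 < b := ha.trans hab
  set n : ℕ := ⌊t / b⌋₊ + 1
  have hn : (0 : ℝ) < n := by positivity
  have hn_gt : t / b < n := by simpa [n] using Nat.lt_floor_add_one (t / b)
  have hn_le : (n : ℝ) ≤ t / b + 1 := by simpa [n] using Nat.floor_le (by positivity : 0 ≤ t / b)
  -- `a * b < t * (b - a)` says exactly that `t / b + 1 < t / a`
  have hn_lt : (n : ℝ) < t / a := by
    rw [div_lt_iff₀ (sub_pos.2 hab)] at ht
    refine hn_le.trans_lt ?_
    rw [div_add_one hb.ne', div_lt_div_iff₀ hb ha]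
    nlinarith
  refine ⟨t / n, ⟨?_, ?_⟩, n, mul_div_cancel₀ t hn.ne'⟩
  · rw [lt_div_iff₀ hn]; rw [lt_div_iff₀ ha] at hn_lt; linarith
  · rw [div_lt_iff₀ hn]; rw [div_lt_iff₀ hb] at hn_gt; linarith

theorem isOpen_setOf_pos_exists_nat_mul_mem {X : Type*} [TopologicalSpace X] {φ : ℝ → X}
    (hφ : ContinuousOn φ (Ici 0)) {U : Set X} (hU : IsOpen U) :
    IsOpen {τ : ℝ | 0 < τ ∧ ∃ n : ℕ, φ (n * τ) ∈ U} := by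
  rw [isOpen_iff_mem_nhds]
  rintro τ ⟨hτ, n, hn⟩
  have hcont : ContinuousOn (fun τ : ℝ ↦ φ (n * τ)) (Ioi 0) :=
    hφ.comp (continuousOn_const.mul continuousOn_id) fun σ (hσ : 0 < σ) ↦
      mul_nonneg n.cast_nonneg hσ.le
  replace hcont := hcont.continuousAt (Ioi_mem_nhds hτ)
  filter_upwards [hcont.preimage_mem_nhds (hU.mem_nhds hn), Ioi_mem_nhds hτ] with σ hσU hσ
  exact ⟨hσ, n, hσU⟩

section Semigroup

variable {X : Type*} [TopologicalSpace X] [AddCommGroup X] [Module ℂ X]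
  [IsTopologicalAddGroup X] [ContinuousSMul ℂ X] [T2Space X] {T : ℝ → X →L[ℂ] X} {x : X}

theorem range_subset_closure_image_Ioi [Nontrivial X]
    (hTadd : ∀ t s : ℝ, 0 ≤ t → 0 ≤ s → T (t + s) = (T t).comp (T s))
    (hx : Dense {y : X | ∃ t : ℝ, 0 ≤ t ∧ T t x = y}) {s : ℝ} (hs : 0 ≤ s) :
    range (T s) ⊆ closure ((fun t ↦ T t x) '' Ioi s) := by
  have := Module.punctured_nhds_neBot ℂ X (T 0 x)
  calc range (T s) ⊆ closure (T s '' ((fun t ↦ T t x) '' Ioi 0)) :=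
        (T s).continuous.range_subset_closure_image_dense (dense_image_Ioi_of_dense_image_Ici hx)
    _ ⊆ closure ((fun t ↦ T t x) '' Ioi s) := closure_mono <| by
        rintro _ ⟨_, ⟨t, ht, rfl⟩, rfl⟩
        exact ⟨s + t, lt_add_of_pos_right s ht, by simp [hTadd s t hs ht.le]⟩

theorem frequently_apply_mem_of_dense_orbit
    (hTadd : ∀ t s : ℝ, 0 ≤ t → 0 ≤ s → T (t + s) = (T t).comp (T s))
    (hTcont : ∀ y : X, ContinuousOn (fun t : ℝ => T t y) (Ici 0))
    (hx : Dense {y : X | ∃ t : ℝ, 0 ≤ t ∧ T t x = y}) {U : Set X} (hU : IsOpen U)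
    (hUne : U.Nonempty) : ∃ᶠ t in atTop, T t x ∈ U := by
  obtain ⟨u, hu⟩ := hUne
  rcases subsingleton_or_nontrivial X with hX | hX
  · exact Frequently.of_forall fun t ↦ Subsingleton.elim u (T t x) ▸ hu
  by_contra h
  obtain ⟨M, hM⟩ := eventually_atTop.1 ((not_frequently.1 h).and (eventually_ge_atTop 0))
  have hM0 : 0 ≤ M := (hM M le_rfl).2
  set K := (fun t ↦ T t x) '' Icc 0 M
  set Y := (LinearMap.range (T M : X →ₗ[ℂ] X)).topologicalClosure
  have hK : IsCompact K := isCompact_Icc.image_of_continuousOn ((hTcont x).mono Icc_subset_Ici_self)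
  have hYU : Disjoint (Y : Set X) U := by
    have hIoi : (fun t ↦ T t x) '' Ioi M ⊆ Uᶜ := by
      rintro _ ⟨t, ht, rfl⟩
      exact (hM t ht.le).1
    rw [← subset_compl_iff_disjoint_right, Submodule.topologicalClosure_coe, LinearMap.coe_range]
    exact closure_minimal ((range_subset_closure_image_Ioi hTadd hx hM0).trans
      (closure_minimal hIoi hU.isClosed_compl)) hU.isClosed_compl
  have hY : Y ≠ ⊤ := fun h ↦ hYU.ne_of_mem (h ▸ Submodule.mem_top) hu rfl
  have hKY : univ ⊆ K ∪ Y := by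
    rw [← hx.closure_eq]
    refine closure_minimal ?_ (hK.isClosed.union (Submodule.isClosed_topologicalClosure _))
    rintro _ ⟨t, ht, rfl⟩
    rcases le_total t M with htM | hMt
    · exact Or.inl ⟨t, ⟨ht, htM⟩, rfl⟩
    · refine Or.inr (subset_closure ⟨T (t - M) x, ?_⟩)
      change T M (T (t - M) x) = T t x
      rw [← ContinuousLinearMap.comp_apply, ← hTadd M _ hM0 (sub_nonneg.2 hMt), add_sub_cancel]
  have hKuniv : K = univ :=
    ((Y.dense_compl hY).mono fun y hy ↦ (hKY (mem_univ y)).resolve_right hy).closure_eq ▸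
      hK.isClosed.closure_eq.symm
  have := noncompactSpace_of_nontrivial ℂ (E := X)
  exact hK.ne_univ hKuniv

end Semigroup

theorem stmt3_general {X : Type*} [TopologicalSpace X] [AddCommGroup X] [Module ℂ X]
    [IsTopologicalAddGroup X] [ContinuousSMul ℂ X]
    [TopologicalSpace.MetrizableSpace X]
    (T : ℝ → X →L[ℂ] X)
    (hTadd : ∀ t s : ℝ, 0 ≤ t → 0 ≤ s → T (t + s) = (T t).comp (T s))
    (hTcont : ∀ y : X, ContinuousOn (fun t : ℝ => T t y) (Set.Ici 0))
    (x : X) (hx : Dense {y : X | ∃ t : ℝ, 0 ≤ t ∧ T t x = y})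
    (U : Set X) (hU : IsOpen U) (hUne : U.Nonempty) :
    IsOpen {τ : ℝ | 0 < τ ∧ ∃ n : ℕ, T ((n : ℝ) * τ) x ∈ U} ∧
      Set.Ioi (0 : ℝ) ⊆ closure {τ : ℝ | 0 < τ ∧ ∃ n : ℕ, T ((n : ℝ) * τ) x ∈ U} := by
  refine ⟨isOpen_setOf_pos_exists_nat_mul_mem (hTcont x) hU,
    Ioi_subset_closure_of_inter_Ioo_nonempty fun a b ha hab ↦ ?_⟩
  obtain ⟨t, htU, τ, hτ, n, rfl⟩ := ((frequently_apply_mem_of_dense_orbit hTadd hTcont hx hU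
    hUne).and_eventually (eventually_exists_mem_Ioo_nat_mul_eq ha hab)).exists
  exact ⟨τ, ⟨ha.trans hτ.1, n, htU⟩, hτ⟩

/-- If `𝒯 = (T_t)_{t≥0}` is a `C₀`-semigroup on a separable metrizable topological vector
space `X` and `x` is a hypercyclic vector for `𝒯`, then for every nonempty open `U ⊆ X`
the set `J_U = {τ > 0 : ∃ n, T_{nτ} x ∈ U}` is open and dense in `(0, ∞)`. -/
theorem stmt3 {X : Type*} [TopologicalSpace X] [AddCommGroup X] [Module ℂ X]
    [IsTopologicalAddGroup X] [ContinuousSMul ℂ X]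
    [TopologicalSpace.SeparableSpace X] [TopologicalSpace.MetrizableSpace X]
    (T : ℝ → X →L[ℂ] X)
    (hT0 : T 0 = 1)
    (hTadd : ∀ t s : ℝ, 0 ≤ t → 0 ≤ s → T (t + s) = (T t).comp (T s))
    (hTcont : ∀ y : X, ContinuousOn (fun t : ℝ => T t y) (Set.Ici 0))
    (x : X) (hx : Dense {y : X | ∃ t : ℝ, 0 ≤ t ∧ T t x = y})
    (U : Set X) (hU : IsOpen U) (hUne : U.Nonempty) :
    IsOpen {τ : ℝ | 0 < τ ∧ ∃ n : ℕ, T ((n : ℝ) * τ) x ∈ U} ∧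
      Set.Ioi (0 : ℝ) ⊆ closure {τ : ℝ | 0 < τ ∧ ∃ n : ℕ, T ((n : ℝ) * τ) x ∈ U} :=
  stmt3_general T hTadd hTcont x hx U hU hUne
end

section
/- Oxtoby–Ulam theorem for semigroups: if 𝒯 = (T_t)_{t≥0} is a C₀-semigroup on a separable Fréchet space X and x ∈ X is a hypercyclic vector for 𝒯, then there exists a dense G_δ subset J of (0, ∞) such that for every t ∈ J, the vector x is hypercyclic for the single operator T_t. -/
/-!
Each `T t₀` has dense range: the orbit lies in the compact set `T [0, t₀] x` together with the
range of `T t₀`, so a continuous functional killing that range would be bounded above on the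
dense orbit. Hence every tail `{T s x : s ≥ t₀}` of the orbit is dense. Since for `0 ≤ a < b`
every large `s` is of the form `n τ` with `τ ∈ (a, b)`, the open sets
`J_U = {τ > 0 : ∃ n, T (n τ) x ∈ U}` are dense in `(0, ∞)` for every nonempty open `U`, and the
Baire category theorem on `ℝ`, applied along a countable base of `X`, gives `J`.
-/

open Filter Set Topology TopologicalSpace

-- The independent `ℝ`- and `ℂ`-module structures agree on `ℚ`, hence everywhere by continuity.
theorem real_smul_eq_complex_smul {E : Type*} [AddCommGroup E] [Module ℝ E] [Module ℂ E]
    [TopologicalSpace E] [T2Space E] [ContinuousSMul ℝ E] [ContinuousSMul ℂ E] (c : ℝ) (v : E) :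
    c • v = (c : ℂ) • v := by
  refine congrFun (Continuous.ext_on Rat.denseRange_cast (continuous_id.smul continuous_const)
    (Complex.continuous_ofReal.smul continuous_const) ?_) c
  rintro _ ⟨q, rfl⟩
  simpa using ratCast_smul_eq ℝ ℂ q v

theorem isScalarTower_real_complex_of_continuousSMul {E : Type*} [AddCommGroup E] [Module ℝ E]
    [Module ℂ E] [TopologicalSpace E] [T2Space E] [ContinuousSMul ℝ E] [ContinuousSMul ℂ E] :
    IsScalarTower ℝ ℂ E :=
  ⟨fun c z v => by rw [Complex.real_smul, mul_smul, real_smul_eq_complex_smul]⟩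

section LocallyConvex

variable {E : Type*} [AddCommGroup E] [Module ℝ E] [TopologicalSpace E] [IsTopologicalAddGroup E]
  [ContinuousSMul ℝ E] [LocallyConvexSpace ℝ E]

theorem Submodule.exists_dual_eq_zero_of_notMem {M : Submodule ℝ E} (hM : IsClosed (M : Set E))
    {z : E} (hz : z ∉ M) : ∃ f : StrongDual ℝ E, (∀ m ∈ M, f m = 0) ∧ f z ≠ 0 := by
  obtain ⟨f, u, hfz, hfM⟩ := geometric_hahn_banach_point_closed M.convex hM hz
  have hu : u < 0 := by simpa using hfM 0 M.zero_mem
  refine ⟨f, fun m hm => ?_, (hfz.trans hu).ne⟩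
  by_contra hfm
  have := hfM (((u - 1) / f m) • m) (M.smul_mem _ hm)
  rw [map_smul, smul_eq_mul, div_mul_cancel₀ _ hfm] at this
  linarith

theorem Submodule.eq_top_of_univ_subset_union_isCompact {M : Submodule ℝ E}
    (hM : IsClosed (M : Set E)) {K : Set E} (hK : IsCompact K) (hcover : univ ⊆ K ∪ M) :
    M = ⊤ := by
  by_contra hne
  obtain ⟨z, hz⟩ : ∃ z, z ∉ M := by simpa [Submodule.eq_top_iff'] using hne
  obtain ⟨f, hfM, hfz⟩ := M.exists_dual_eq_zero_of_notMem hM hz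
  obtain ⟨C, hC⟩ := (hK.image f.continuous).bddAbove
  have hfw : f (((|C| + 1) / f z) • z) = |C| + 1 := by
    rw [map_smul, smul_eq_mul, div_mul_cancel₀ _ hfz]
  rcases hcover (mem_univ (((|C| + 1) / f z) • z)) with hwK | hwM
  · linarith [hC (mem_image_of_mem f hwK), le_abs_self C]
  · linarith [hfM _ hwM, abs_nonneg C]

end LocallyConvex

theorem subset_closure_inter_iInter_of_isOpen {X ι : Type*} [TopologicalSpace X] [BaireSpace X]
    [Countable ι] {V : Set X} {f : ι → Set X} (hV : IsOpen V) (ho : ∀ i, IsOpen (f i))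
    (hd : ∀ i, V ⊆ closure (f i)) : V ⊆ closure (V ∩ ⋂ i, f i) := by
  have hdense : Dense (⋂ i, f i ∪ (closure V)ᶜ) := by
    refine dense_iInter_of_isOpen (fun i => (ho i).union isClosed_closure.isOpen_compl)
      fun i y => ?_
    by_cases hy : y ∈ closure V
    · exact closure_mono subset_union_left (closure_minimal (hd i) isClosed_closure hy)
    · exact subset_closure (Or.inr hy)
  intro v hv
  rw [mem_closure_iff]
  intro O hO hvO
  obtain ⟨p, ⟨hpO, hpV⟩, hp⟩ := hdense.inter_open_nonempty (O ∩ V) (hO.inter hV) ⟨v, hvO, hv⟩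
  exact ⟨p, hpO, hpV, mem_iInter.2 fun i =>
    (mem_iInter.1 hp i).resolve_right (not_not.2 (subset_closure hpV))⟩

theorem eventually_exists_nat_mul_eq {a b : ℝ} (ha : 0 ≤ a) (hab : a < b) :
    ∀ᶠ s in atTop, ∃ n : ℕ, ∃ τ ∈ Ioo a b, n * τ = s := by
  have hb : 0 < b := ha.trans_lt hab
  filter_upwards [eventually_gt_atTop (a * b / (b - a)), eventually_gt_atTop 0] with s hs hs0
  set n : ℕ := ⌊s / b⌋₊ + 1
  have hsn : s < n * b := by
    have := Nat.lt_floor_add_one (s / b)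
    rw [div_lt_iff₀ hb] at this
    exact_mod_cast this
  have hns : n * a < s := by
    have hn : (n : ℝ) ≤ s / b + 1 := by
      have := Nat.floor_le (div_pos hs0 hb).le
      push_cast [n]
      linarith
    rw [div_lt_iff₀ (by linarith)] at hs
    calc n * a ≤ (s / b + 1) * a := by gcongr
      _ = (s * a + a * b) / b := by field_simp
      _ < s := by rw [div_lt_iff₀ hb]; linarith
  have hn0 : (0 : ℝ) < n := by positivity
  exact ⟨n, s / n, ⟨by rwa [lt_div_iff₀' hn0], by rwa [div_lt_iff₀' hn0]⟩, by field_simp⟩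

theorem denseRange_of_dense_orbit {𝕜 X : Type*} [Semiring 𝕜] [Module ℝ 𝕜] [AddCommGroup X]
    [Module 𝕜 X] [Module ℝ X] [IsScalarTower ℝ 𝕜 X] [TopologicalSpace X] [T2Space X]
    [IsTopologicalAddGroup X] [ContinuousSMul ℝ X] [ContinuousConstSMul 𝕜 X]
    [LocallyConvexSpace ℝ X]
    (T : ℝ → X →L[𝕜] X) (x : X)
    (hTadd : ∀ t s : ℝ, 0 ≤ t → 0 ≤ s → T (t + s) = (T t).comp (T s))
    (hTcont : ContinuousOn (fun t => T t x) (Ici 0))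
    (hx : Dense ((fun t => T t x) '' Ici 0)) {t₀ : ℝ} (ht₀ : 0 ≤ t₀) : DenseRange (T t₀) := by
  set M := ((LinearMap.range (T t₀ : X →ₗ[𝕜] X)).topologicalClosure).restrictScalars ℝ
  have hM : IsClosed (M : Set X) :=
    (LinearMap.range (T t₀ : X →ₗ[𝕜] X)).isClosed_topologicalClosure
  have hK : IsCompact ((fun t => T t x) '' Icc 0 t₀) :=
    isCompact_Icc.image_of_continuousOn (hTcont.mono Icc_subset_Ici_self)
  have horbit : (fun t => T t x) '' Ici 0 ⊆ (fun t => T t x) '' Icc 0 t₀ ∪ M := by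
    rintro _ ⟨s, hs, rfl⟩
    rcases le_total s t₀ with hst | hts
    · exact Or.inl ⟨s, ⟨hs, hst⟩, rfl⟩
    · refine Or.inr (subset_closure ⟨T (s - t₀) x, ?_⟩)
      change T t₀ (T (s - t₀) x) = T s x
      rw [← ContinuousLinearMap.comp_apply, ← hTadd _ _ ht₀ (sub_nonneg.2 hts), add_sub_cancel]
  have hMtop := Submodule.eq_top_of_univ_subset_union_isCompact hM hK
    (hx.closure_eq ▸ closure_minimal horbit (hK.isClosed.union hM))
  rw [DenseRange, dense_iff_closure_eq]
  simpa [M, LinearMap.coe_range] using congrArg ((↑) : Submodule ℝ X → Set X) hMtop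

section Semigroup

variable {𝕜 X : Type*} [Semiring 𝕜] [AddCommMonoid X] [Module 𝕜 X] [TopologicalSpace X]
  (T : ℝ → X →L[𝕜] X) (x : X)

theorem semigroup_pow_eq_mul (hT0 : T 0 = 1)
    (hTadd : ∀ t s : ℝ, 0 ≤ t → 0 ≤ s → T (t + s) = (T t).comp (T s)) {t : ℝ} (ht : 0 ≤ t)
    (n : ℕ) : T t ^ n = T (n * t) := by
  induction n with
  | zero => simp [hT0]
  | succ n ih =>
    rw [pow_succ, ih, ContinuousLinearMap.mul_def, ← hTadd _ _ (by positivity) ht]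
    push_cast
    ring_nf

theorem dense_orbit_Ici_of_denseRange
    (hTadd : ∀ t s : ℝ, 0 ≤ t → 0 ≤ s → T (t + s) = (T t).comp (T s))
    (hx : Dense ((fun t => T t x) '' Ici 0)) {t₀ : ℝ} (ht₀ : 0 ≤ t₀) (hT : DenseRange (T t₀)) :
    Dense ((fun t => T t x) '' Ici t₀) := by
  refine (hT.dense_image (T t₀).continuous hx).mono ?_
  rintro _ ⟨_, ⟨s, hs, rfl⟩, rfl⟩
  exact ⟨t₀ + s, by simpa using hs, by simp only [hTadd _ _ ht₀ hs]; rfl⟩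

def visitingSteps (U : Set X) : Set ℝ :=
  Ioi 0 ∩ ⋃ n : ℕ, (fun τ => T (n * τ) x) ⁻¹' U

theorem isOpen_visitingSteps (hTcont : ContinuousOn (fun t => T t x) (Ici 0)) {U : Set X}
    (hU : IsOpen U) : IsOpen (visitingSteps T x U) := by
  rw [visitingSteps, inter_iUnion]
  refine isOpen_iUnion fun n => ?_
  refine ContinuousOn.isOpen_inter_preimage ?_ isOpen_Ioi hU
  exact hTcont.comp (continuous_const.mul continuous_id).continuousOn
    fun τ hτ => mul_nonneg n.cast_nonneg ((mem_Ioi.1 hτ).le)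

theorem Ioi_subset_closure_visitingSteps
    (htail : ∀ t₀, 0 ≤ t₀ → Dense ((fun t => T t x) '' Ici t₀)) {U : Set X} (hU : IsOpen U)
    (hne : U.Nonempty) : Ioi 0 ⊆ closure (visitingSteps T x U) := by
  intro t ht
  rw [mem_closure_iff_nhds_basis' (nhds_basis_Ioo_pos t)]
  intro ε hε
  have hab : max (t - ε) 0 < t + ε := max_lt (by linarith) (by linarith [mem_Ioi.1 ht])
  obtain ⟨N, hN⟩ :=
    (eventually_exists_nat_mul_eq (le_max_right (t - ε) 0) hab).exists_forall_of_atTop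
  obtain ⟨_, ⟨s, hs, rfl⟩, hsU⟩ := (htail (max N 0) (le_max_right _ _)).exists_mem_open hU hne
  obtain ⟨n, τ, ⟨hτa, hτb⟩, rfl⟩ := hN s (le_of_max_le_left hs)
  exact ⟨τ, ⟨(le_max_left _ _).trans_lt hτa, hτb⟩, (le_max_right _ _).trans_lt hτa,
    mem_iUnion.2 ⟨n, hsU⟩⟩

end Semigroup

theorem stmt4_general {X : Type*} [AddCommGroup X] [Module ℂ X] [Module ℝ X]
    [UniformSpace X] [IsUniformAddGroup X] [ContinuousSMul ℂ X] [ContinuousSMul ℝ X]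
    [LocallyConvexSpace ℝ X]
    [TopologicalSpace.SeparableSpace X] [TopologicalSpace.MetrizableSpace X]
    (T : ℝ → X →L[ℂ] X)
    (hT0 : T 0 = 1)
    (hTadd : ∀ t s : ℝ, 0 ≤ t → 0 ≤ s → T (t + s) = (T t).comp (T s))
    (hTcont : ∀ y : X, ContinuousOn (fun t : ℝ => T t y) (Set.Ici 0))
    (x : X) (hx : Dense {y : X | ∃ t : ℝ, 0 ≤ t ∧ T t x = y}) :
    ∃ J : Set ℝ, J ⊆ Set.Ioi 0 ∧ IsGδ J ∧ Set.Ioi (0 : ℝ) ⊆ closure J ∧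
      ∀ t ∈ J, Dense (Set.range fun n : ℕ => ((T t) ^ n) x) := by
  have := isScalarTower_real_complex_of_continuousSMul (E := X)
  have := IsUniformAddGroup.uniformity_countably_generated (α := X)
  have := UniformSpace.secondCountable_of_separable X
  have htail (t₀ : ℝ) (ht₀ : 0 ≤ t₀) : Dense ((fun t => T t x) '' Ici t₀) :=
    dense_orbit_Ici_of_denseRange T x hTadd hx ht₀
      (denseRange_of_dense_orbit T x hTadd (hTcont x) hx ht₀)
  have hB := isBasis_countableBasis X
  have := (countable_countableBasis X).to_subtype
  refine ⟨Ioi 0 ∩ ⋂ U : countableBasis X, visitingSteps T x U, inter_subset_left,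
    isOpen_Ioi.isGδ.inter (.iInter_of_isOpen fun U => isOpen_visitingSteps T x (hTcont x)
      (hB.isOpen U.2)), ?_, ?_⟩
  · exact subset_closure_inter_iInter_of_isOpen isOpen_Ioi
      (fun U => isOpen_visitingSteps T x (hTcont x) (hB.isOpen U.2))
      fun U => Ioi_subset_closure_visitingSteps T x htail (hB.isOpen U.2)
        (nonempty_iff_ne_empty.2 fun h => empty_notMem_countableBasis X (h ▸ U.2))
  · rintro t ⟨ht, htJ⟩
    rw [hB.dense_iff]
    intro U hU _
    obtain ⟨-, hvisit⟩ := mem_iInter.1 htJ ⟨U, hU⟩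
    obtain ⟨n, hn⟩ := mem_iUnion.1 hvisit
    exact ⟨_, hn, n, by simp only [semigroup_pow_eq_mul T hT0 hTadd ht.le]⟩

/-- **Oxtoby–Ulam theorem for semigroups.** If `𝒯 = (T_t)_{t≥0}` is a `C₀`-semigroup on a
separable Fréchet space `X` and `x` is a hypercyclic vector for `𝒯`, then there is a dense
`G_δ` subset `J` of `(0, ∞)` such that for every `t ∈ J` the vector `x` is hypercyclic for
the single operator `T t`. -/
theorem stmt4 {X : Type*} [AddCommGroup X] [Module ℂ X] [Module ℝ X]
    [UniformSpace X] [IsUniformAddGroup X] [ContinuousSMul ℂ X] [ContinuousSMul ℝ X]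
    [LocallyConvexSpace ℝ X] [CompleteSpace X]
    [TopologicalSpace.SeparableSpace X] [TopologicalSpace.MetrizableSpace X]
    (T : ℝ → X →L[ℂ] X)
    (hT0 : T 0 = 1)
    (hTadd : ∀ t s : ℝ, 0 ≤ t → 0 ≤ s → T (t + s) = (T t).comp (T s))
    (hTcont : ∀ y : X, ContinuousOn (fun t : ℝ => T t y) (Set.Ici 0))
    (x : X) (hx : Dense {y : X | ∃ t : ℝ, 0 ≤ t ∧ T t x = y}) :
    ∃ J : Set ℝ, J ⊆ Set.Ioi 0 ∧ IsGδ J ∧ Set.Ioi (0 : ℝ) ⊆ closure J ∧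
      ∀ t ∈ J, Dense (Set.range fun n : ℕ => ((T t) ^ n) x) :=
  stmt4_general T hT0 hTadd hTcont x hx
end

section
/- Gottschalk–Hedlund transfer (discrete to continuous direction): let 𝒯 = (T_t)_{t≥0} be a C₀-semigroup on a metrizable topological vector space X, let h > 0, and let x ∈ X. If x is strongly recurrent for the operator T_h, then x is strongly recurrent for the semigroup 𝒯. -/
/-!
If `x ∈ U` and `T_{nh} x` lies close enough to `x`, then the orbit of `T_{nh} x` spends a
uniformly positive amount of time `c` in `U` during `[0, h)`; this needs only the continuity of each
`T_s` and continuity from below of Lebesgue measure, not any equicontinuity of the semigroup.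
Shifting by `nh`, every good integer `n < N` contributes at least `c` to the time spent in `U`
during the disjoint window `[nh, nh + h)`, so the continuous density at time `Nh` is at least
`c / h` times the discrete density at `N`.
-/

open scoped Classical
open Filter MeasureTheory
open scoped ENNReal
open Set Function Topology

lemma ContinuousOn.measurableSet_preimage_inter {α β : Type*} [TopologicalSpace α]
    [MeasurableSpace α] [OpensMeasurableSpace α] [TopologicalSpace β] {f : α → β} {s : Set α}
    (hf : ContinuousOn f s) (hs : MeasurableSet s) {t : Set β} (ht : IsOpen t) :
    MeasurableSet (f ⁻¹' t ∩ s) := by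
  obtain ⟨u, hu, hfu⟩ := continuousOn_iff'.1 hf t ht
  rw [hfu]
  exact hu.measurableSet.inter hs

/-- For `y k → x`, the sets where `F a (y k) ∈ U` for all `k ≥ m` increase to a superset of
`{a | F a x ∈ U}`, so continuity from below (valid for arbitrary sets) applies. -/
lemma eventually_lt_measure_setOf_mem {α X Y : Type*} [MeasurableSpace α] {μ : Measure α}
    [TopologicalSpace X] [FirstCountableTopology X] [TopologicalSpace Y] {F : α → X → Y} {x : X}
    (hF : ∀ a, ContinuousAt (F a) x) {U : Set Y} (hU : IsOpen U) {c : ℝ≥0∞}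
    (hc : c < μ {a | F a x ∈ U}) : ∀ᶠ y in 𝓝 x, c < μ {a | F a y ∈ U} := by
  by_contra hne
  obtain ⟨y, hy, hyc⟩ := frequently_iff_seq_forall.1 (not_eventually.1 hne)
  set B : ℕ → Set α := fun m => {a | ∀ k ≥ m, F a (y k) ∈ U}
  have hB : Monotone B := fun m m' hm a (ha : ∀ k ≥ m, F a (y k) ∈ U) k hk => ha k (hm.trans hk)
  have hsub : {a | F a x ∈ U} ⊆ ⋃ m, B m := fun a ha =>
    mem_iUnion.2 (eventually_atTop.1 (((hF a).tendsto.comp hy) (hU.mem_nhds ha)))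
  refine (hc.trans_le ?_).false
  calc μ {a | F a x ∈ U} ≤ μ (⋃ m, B m) := measure_mono hsub
    _ = ⨆ m, μ (B m) := hB.measure_iUnion
    _ ≤ c := iSup_le fun m =>
      (measure_mono fun a (ha : ∀ k ≥ m, F a (y k) ∈ U) => ha m le_rfl).trans (not_lt.1 (hyc m))

lemma volume_inter_Ico_pos_of_mem_nhdsGE {a b : ℝ} (hab : a < b) {s : Set ℝ} (hs : s ∈ 𝓝[≥] a) :
    0 < volume (s ∩ Ico a b) := by
  obtain ⟨u, hu, hsub⟩ :=
    (mem_nhdsGE_iff_exists_Ico_subset' hab).1 (inter_mem hs (Ico_mem_nhdsGE hab))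
  calc (0 : ℝ≥0∞) < volume (Ico a u) := by simpa using hu
    _ ≤ volume (s ∩ Ico a b) := measure_mono hsub

lemma pairwise_disjoint_Ico_natCast_mul {h : ℝ} (hh : 0 ≤ h) :
    Pairwise (Disjoint on fun n : ℕ => Ico (n * h) (n * h + h)) := by
  intro m n hmn
  wlog hlt : m < n generalizing m n
  · exact (this hmn.symm (by omega)).symm
  have hmn' : (m : ℝ) + 1 ≤ n := by exact_mod_cast hlt
  exact disjoint_left.2 fun t htm htn => by nlinarith [htm.2, htn.1]

lemma card_filter_mul_le_measure_inter_Ico (μ : Measure ℝ) {E : Set ℝ} (hE : MeasurableSet E)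
    {h : ℝ} (hh : 0 ≤ h) {p : ℕ → Prop} [DecidablePred p] {c : ℝ≥0∞}
    (hc : ∀ n, p n → c ≤ μ (E ∩ Ico (n * h) (n * h + h))) (N : ℕ) :
    ((Finset.range N).filter p).card * c ≤ μ (E ∩ Ico 0 (N * h)) := by
  set G := (Finset.range N).filter p
  have hwindow : ∀ n ∈ G, Ico ((n : ℝ) * h) (n * h + h) ⊆ Ico 0 (N * h) := by
    intro n hn
    have : (n : ℝ) + 1 ≤ N := by exact_mod_cast Finset.mem_range.1 (Finset.mem_filter.1 hn).1
    exact Ico_subset_Ico (by positivity) (by nlinarith)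
  calc (G.card : ℝ≥0∞) * c = ∑ n ∈ G, c := by rw [Finset.sum_const, nsmul_eq_mul]
    _ ≤ ∑ n ∈ G, μ (E ∩ Ico (n * h) (n * h + h)) :=
      Finset.sum_le_sum fun n hn => hc n (Finset.mem_filter.1 hn).2
    _ = μ (⋃ n ∈ G, E ∩ Ico (n * h) (n * h + h)) :=
      (measure_biUnion_finset
        (fun m _ n _ hmn =>
          ((pairwise_disjoint_Ico_natCast_mul hh hmn).inter_left' E).inter_right' E)
        fun n _ => hE.inter measurableSet_Ico).symm
    _ ≤ μ (E ∩ Ico 0 (N * h)) :=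
      measure_mono (iUnion₂_subset fun n hn => inter_subset_inter_right E (hwindow n hn))

lemma isBoundedUnder_toReal_volume_div {s : ℝ → Set ℝ} (hs : ∀ S, s S ⊆ Icc 0 S) :
    IsBoundedUnder (· ≤ ·) atTop fun S => (volume (s S)).toReal / S := by
  refine isBoundedUnder_of ⟨1, fun S => ?_⟩
  rcases le_or_gt S 0 with hS | hS
  · exact (div_nonpos_of_nonneg_of_nonpos ENNReal.toReal_nonneg hS).trans zero_le_one
  · refine div_le_one_of_le₀ (ENNReal.toReal_le_of_le_ofReal hS.le ?_) hS.le
    simpa using measure_mono (μ := volume) (hs S)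

lemma limsup_pos_of_mul_le_comp_natCast_mul {f : ℝ → ℝ} {d : ℕ → ℝ} {h k : ℝ} (hh : 0 < h)
    (hk : 0 < k) (hd : ∀ N, 0 ≤ d N) (hf : IsBoundedUnder (· ≤ ·) atTop f)
    (hdf : ∀ N : ℕ, k * d N ≤ f (N * h)) (hlim : 0 < limsup d atTop) :
    0 < limsup f atTop := by
  have hfreq : ∃ᶠ N in atTop, limsup d atTop / 2 < d N :=
    frequently_lt_of_lt_limsup (isCoboundedUnder_le_of_le atTop hd) (half_lt_self hlim)
  have hfreqR : ∃ᶠ S in atTop, k * (limsup d atTop / 2) ≤ f S :=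
    (tendsto_natCast_atTop_atTop.atTop_mul_const hh).frequently
      (hfreq.mono fun N hN => (mul_le_mul_of_nonneg_left hN.le hk.le).trans (hdf N))
  exact (by positivity : 0 < k * (limsup d atTop / 2)).trans_le
    (le_limsup_of_frequently_le hfreqR hf)

namespace Semiflow

variable {X : Type*} {Φ : ℝ → X → X}

lemma iterate_apply (hΦ0 : ∀ y, Φ 0 y = y)
    (hΦ : ∀ t s, 0 ≤ t → 0 ≤ s → ∀ y, Φ (t + s) y = Φ t (Φ s y)) {h : ℝ} (hh : 0 ≤ h)
    (n : ℕ) (y : X) : (Φ h)^[n] y = Φ (n * h) y := by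
  induction n with
  | zero => simp [hΦ0]
  | succ n ih =>
    rw [Function.iterate_succ_apply', ih, ← hΦ h _ hh (by positivity)]
    push_cast
    ring_nf

lemma volume_preimage_inter_Ico_apply (hΦ : ∀ t s, 0 ≤ t → 0 ≤ s → ∀ y, Φ (t + s) y = Φ t (Φ s y))
    {t : ℝ} (ht : 0 ≤ t) (y : X) (U : Set X) (h : ℝ) :
    volume ((fun s => Φ s (Φ t y)) ⁻¹' U ∩ Ico 0 h) =
      volume ((fun s => Φ s y) ⁻¹' U ∩ Ici 0 ∩ Ico t (t + h)) := by
  rw [← measure_preimage_add_right volume t ((fun s => Φ s y) ⁻¹' U ∩ Ici 0 ∩ Ico t (t + h))]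
  congr 1
  ext s
  simp only [mem_inter_iff, mem_preimage, mem_Ico, mem_Ici]
  constructor
  · rintro ⟨hsU, hs0, hsh⟩
    exact ⟨⟨by rwa [hΦ s t hs0 ht], by linarith⟩, by linarith, by linarith⟩
  · rintro ⟨⟨hsU, -⟩, hts, hsh⟩
    have hs0 : 0 ≤ s := by linarith
    exact ⟨by rwa [← hΦ s t hs0 ht], hs0, by linarith⟩

lemma exists_nhds_ofReal_le_volume_preimage_inter_Ico [TopologicalSpace X]
    [FirstCountableTopology X]
    (hΦc : ∀ t, Continuous (Φ t)) {x : X} (hΦ0 : Φ 0 x = x)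
    (hx : ContinuousWithinAt (fun t => Φ t x) (Ici 0) 0) {U : Set X} (hU : IsOpen U)
    (hxU : x ∈ U) {h : ℝ} (hh : 0 < h) :
    ∃ c > 0, ∃ V, IsOpen V ∧ x ∈ V ∧
      ∀ y ∈ V, ENNReal.ofReal c ≤ volume ((fun s => Φ s y) ⁻¹' U ∩ Ico 0 h) := by
  have hpos : 0 < volume.restrict (Ico 0 h) {s | Φ s x ∈ U} := by
    rw [Measure.restrict_apply' measurableSet_Ico]
    exact volume_inter_Ico_pos_of_mem_nhdsGE hh (hx (hU.mem_nhds (show Φ 0 x ∈ U by rwa [hΦ0])))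
  obtain ⟨c, -, hc, hcx⟩ := ENNReal.lt_iff_exists_real_btwn.1 hpos
  obtain ⟨V, hV, hVo, hxV⟩ := eventually_nhds_iff.1
    (eventually_lt_measure_setOf_mem (fun s => (hΦc s).continuousAt) hU hcx)
  refine ⟨c, ENNReal.ofReal_pos.1 hc, V, hVo, hxV, fun y hy => ?_⟩
  have := hV y hy
  rw [Measure.restrict_apply' measurableSet_Ico] at this
  exact this.le

lemma card_filter_iterate_mem_mul_le_toReal_volume [TopologicalSpace X] (hΦ0 : ∀ y, Φ 0 y = y)
    (hΦ : ∀ t s, 0 ≤ t → 0 ≤ s → ∀ y, Φ (t + s) y = Φ t (Φ s y)) {x : X}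
    (hx : ContinuousOn (fun t => Φ t x) (Ici 0)) {U V : Set X} (hU : IsOpen U) {h c : ℝ}
    (hh : 0 ≤ h) (hc : 0 ≤ c)
    (hV : ∀ y ∈ V, ENNReal.ofReal c ≤ volume ((fun s => Φ s y) ⁻¹' U ∩ Ico 0 h)) (N : ℕ) :
    ((Finset.range N).filter fun n => (Φ h)^[n] x ∈ V).card * c ≤
      (volume {t : ℝ | t ∈ Icc 0 (N * h) ∧ Φ t x ∈ U}).toReal := by
  have hwindow : ∀ n : ℕ, (Φ h)^[n] x ∈ V →
      ENNReal.ofReal c ≤ volume ((fun t => Φ t x) ⁻¹' U ∩ Ici 0 ∩ Ico (n * h) (n * h + h)) := by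
    intro n hn
    rw [← volume_preimage_inter_Ico_apply hΦ (by positivity), ← iterate_apply hΦ0 hΦ hh]
    exact hV _ hn
  have hcount : ((Finset.range N).filter fun n => (Φ h)^[n] x ∈ V).card * ENNReal.ofReal c ≤
      volume {t : ℝ | t ∈ Icc 0 (N * h) ∧ Φ t x ∈ U} :=
    (card_filter_mul_le_measure_inter_Ico volume
      (hx.measurableSet_preimage_inter measurableSet_Ici hU) hh hwindow N).trans
    (measure_mono fun t ht => ⟨Ico_subset_Icc_self ht.2, ht.1.1⟩)
  have hfin : volume {t : ℝ | t ∈ Icc 0 (N * h) ∧ Φ t x ∈ U} ≠ ∞ :=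
    ((measure_mono fun _ => And.left).trans_lt measure_Icc_lt_top).ne
  simpa [ENNReal.toReal_ofReal hc] using ENNReal.toReal_mono hfin hcount

end Semiflow

theorem stmt6_general {X : Type*} [TopologicalSpace X] [TopologicalSpace.MetrizableSpace X]
    [AddCommGroup X] [Module ℂ X]
    (T : ℝ → X →L[ℂ] X)
    (hT0 : T 0 = 1)
    (hTadd : ∀ t s : ℝ, 0 ≤ t → 0 ≤ s → T (t + s) = (T t).comp (T s))
    (hTcont : ∀ y : X, ContinuousOn (fun t : ℝ => T t y) (Set.Ici 0))
    (h : ℝ) (hh : 0 < h) (x : X)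
    (hrec : ∀ U : Set X, IsOpen U → x ∈ U →
      0 < Filter.atTop.limsup (fun N : ℕ =>
        (((Finset.range N).filter (fun n => ((T h) ^ n) x ∈ U)).card : ℝ) / N)) :
    ∀ U : Set X, IsOpen U → x ∈ U →
      0 < Filter.atTop.limsup (fun S : ℝ =>
        (volume {t : ℝ | t ∈ Set.Icc 0 S ∧ T t x ∈ U}).toReal / S) := by
  intro U hU hxU
  have hT0_apply : ∀ y, T 0 y = y := fun y => by simp [hT0]
  have hTadd_apply : ∀ t s, 0 ≤ t → 0 ≤ s → ∀ y, T (t + s) y = T t (T s y) := fun t s ht hs y => by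
    rw [hTadd t s ht hs, ContinuousLinearMap.comp_apply]
  obtain ⟨c, hc, V, hVo, hxV, hV⟩ := Semiflow.exists_nhds_ofReal_le_volume_preimage_inter_Ico
    (fun t => (T t).continuous) (hT0_apply x) (hTcont x 0 self_mem_Ici) hU hxU hh
  refine limsup_pos_of_mul_le_comp_natCast_mul hh (div_pos hc hh) (fun N => by positivity)
    (isBoundedUnder_toReal_volume_div fun _ _ => And.left) (fun N => ?_) (hrec V hVo hxV)
  have hcount := Semiflow.card_filter_iterate_mem_mul_le_toReal_volume (Φ := fun t => T t)
    hT0_apply hTadd_apply (hTcont x) hU hh.le hc.le hV N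
  simp only [← FunLike.coe_pow_eq_iterate] at hcount
  calc c / h * (((Finset.range N).filter fun n => (T h ^ n) x ∈ V).card / N)
      = ((Finset.range N).filter fun n => (T h ^ n) x ∈ V).card * c / (N * h) := by ring
    _ ≤ _ := div_le_div_of_nonneg_right hcount (by positivity)

/-- **Gottschalk–Hedlund transfer (discrete to continuous direction).** If `𝒯 = (T_t)_{t≥0}`
is a `C₀`-semigroup on a metrizable topological vector space `X`, `h > 0` and `x ∈ X` is
strongly recurrent for the operator `T h`, then `x` is strongly recurrent for `𝒯`. -/
theorem stmt6 {X : Type*} [TopologicalSpace X] [TopologicalSpace.MetrizableSpace X]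
    [AddCommGroup X] [Module ℂ X] [IsTopologicalAddGroup X] [ContinuousSMul ℂ X]
    (T : ℝ → X →L[ℂ] X)
    (hT0 : T 0 = 1)
    (hTadd : ∀ t s : ℝ, 0 ≤ t → 0 ≤ s → T (t + s) = (T t).comp (T s))
    (hTcont : ∀ y : X, ContinuousOn (fun t : ℝ => T t y) (Set.Ici 0))
    (h : ℝ) (hh : 0 < h) (x : X)
    (hrec : ∀ U : Set X, IsOpen U → x ∈ U →
      0 < Filter.atTop.limsup (fun N : ℕ =>
        (((Finset.range N).filter (fun n => ((T h) ^ n) x ∈ U)).card : ℝ) / N)) :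
    ∀ U : Set X, IsOpen U → x ∈ U →
      0 < Filter.atTop.limsup (fun S : ℝ =>
        (volume {t : ℝ | t ∈ Set.Icc 0 S ∧ T t x ∈ U}).toReal / S) :=
  stmt6_general T hT0 hTadd hTcont h hh x hrec
end

section
/- Let 𝒯 = (T_t)_{t≥0} be a C₀-semigroup on a topological vector space X, let h > 0, and let x ∈ X. If x is a frequently hypercyclic vector for the single operator T_h, then x is a frequently hypercyclic vector for the semigroup 𝒯 with respect to upper density: for every nonempty open U ⊆ X, limsup_{T→∞} (1/T)·meas{t ∈ [0,T] : T_t x ∈ U} > 0. -/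
/-!
Pick `y₀ ∈ U` and `0 < δ ≤ h` with `T s y₀ ∈ U` for `s ∈ (0, δ)`. For each such `s` the open set
`(T s)⁻¹ U` contains `y₀`, so frequent hypercyclicity of `x` for `T h` says that the times `n`
with `T (n h + s) x ∈ U` have positive lower density. Integrating these densities over
`s ∈ (0, δ)` and applying Fatou's lemma, the set `{t | T t x ∈ U}` meets the disjoint blocks
`(n h, n h + δ)`, `n < N`, in total measure at least `c N` for large `N`; at `S = N h` this is
a positive proportion of `[0, S]`. Fatou's lemma is what makes pointwise continuity of
`s ↦ T s y₀` suffice, without any equicontinuity of the family `(T s)`.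
-/

open scoped Classical
open Filter MeasureTheory Set Topology
open scoped ENNReal Function

theorem map_natCast_mul_eq_pow {M : Type*} [Monoid M] {T : ℝ → M} (hT0 : T 0 = 1)
    (hTadd : ∀ t s : ℝ, 0 ≤ t → 0 ≤ s → T (t + s) = T t * T s) {h : ℝ} (hh : 0 ≤ h) (n : ℕ) :
    T (n * h) = T h ^ n := by
  induction n with
  | zero => simp [hT0]
  | succ n ih =>
    rw [Nat.cast_succ, add_one_mul, hTadd _ _ (by positivity) hh, ih, pow_succ]

theorem liminf_natCast_div_pos_of_real {u : ℕ → ℕ}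
    (hu : 0 < atTop.liminf fun N : ℕ => (u N : ℝ) / N) :
    0 < atTop.liminf fun N : ℕ => (u N : ℝ≥0∞) / N := by
  obtain ⟨c, hc, hcu⟩ : ∃ c : ℝ, 0 < c ∧ ∀ᶠ N : ℕ in atTop, c < (u N : ℝ) / N :=
    ⟨_, half_pos hu, eventually_lt_of_lt_liminf (half_lt_self hu)
      (isBoundedUnder_of ⟨0, fun N => by positivity⟩)⟩
  calc (0 : ℝ≥0∞) < ENNReal.ofReal c := ENNReal.ofReal_pos.2 hc
    _ ≤ atTop.liminf fun N : ℕ => (u N : ℝ≥0∞) / N := by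
      refine le_liminf_of_le (by isBoundedDefault) ?_
      filter_upwards [hcu, eventually_gt_atTop 0] with N hN hN0
      calc ENNReal.ofReal c ≤ ENNReal.ofReal ((u N : ℝ) / N) := ENNReal.ofReal_le_ofReal hN.le
        _ = (u N : ℝ≥0∞) / N := by
          rw [ENNReal.ofReal_div_of_pos (by positivity), ENNReal.ofReal_natCast,
            ENNReal.ofReal_natCast]

theorem liminf_sum_measure_div_pos {α : Type*} [MeasurableSpace α] {μ : Measure α}
    {C : ℕ → Set α} (hC : ∀ n, MeasurableSet (C n)) {E : Set α} (hE : μ E ≠ 0)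
    (hdens : ∀ s ∈ E, 0 < atTop.liminf fun N : ℕ =>
      (((Finset.range N).filter fun n => s ∈ C n).card : ℝ≥0∞) / N) :
    0 < atTop.liminf fun N : ℕ => (∑ n ∈ Finset.range N, μ (C n)) / N := by
  set g : ℕ → α → ℝ≥0∞ := fun N s => (∑ n ∈ Finset.range N, (C n).indicator 1 s) / N
  have hg_card :
      ∀ N s, g N s = (((Finset.range N).filter fun n => s ∈ C n).card : ℝ≥0∞) / N := by
    intro N s
    simp only [g, Finset.natCast_card_filter, Set.indicator_apply, Pi.one_apply]
  have hC_ind : ∀ n, Measurable ((C n).indicator (1 : α → ℝ≥0∞)) :=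
    fun n => measurable_one.indicator (hC n)
  have hg_meas : ∀ N, Measurable (g N) :=
    fun N => (Finset.measurable_sum _ fun n _ => hC_ind n).div_const _
  have hg_int : ∀ N, ∫⁻ s, g N s ∂μ = (∑ n ∈ Finset.range N, μ (C n)) / N := by
    intro N
    simp only [g, div_eq_mul_inv]
    rw [lintegral_mul_const _ (Finset.measurable_sum _ fun n _ => hC_ind n),
      lintegral_finsetSum _ fun n _ => hC_ind n]
    simp only [lintegral_indicator_one (hC _)]
  have hpos : 0 < ∫⁻ s, atTop.liminf (fun N => g N s) ∂μ := by
    rw [lintegral_pos_iff_support (Measurable.liminf hg_meas)]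
    refine (pos_iff_ne_zero.2 hE).trans_le (measure_mono fun s hs => ?_)
    simpa only [Function.mem_support, hg_card] using (hdens s hs).ne'
  calc 0 < ∫⁻ s, atTop.liminf (fun N => g N s) ∂μ := hpos
    _ ≤ atTop.liminf fun N => ∫⁻ s, g N s ∂μ := lintegral_liminf_le hg_meas
    _ = _ := by simp only [hg_int]

theorem sum_volume_preimage_add_inter_Ioo_le {A : Set ℝ} (hA : MeasurableSet A) {h δ : ℝ}
    (hδ : 0 ≤ δ) (hδh : δ ≤ h) (N : ℕ) :
    ∑ n ∈ Finset.range N, volume ((fun s => n * h + s) ⁻¹' A ∩ Ioo 0 δ) ≤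
      volume (Icc 0 (N * h) ∩ A) := by
  have hblock : ∀ n : ℕ, volume ((fun s => n * h + s) ⁻¹' A ∩ Ioo 0 δ) =
      volume (A ∩ Ioo (n * h) (n * h + δ)) := by
    intro n
    rw [← measure_preimage_add volume (n * h) (A ∩ _), preimage_inter, preimage_const_add_Ioo,
      sub_self, add_sub_cancel_left]
  have hdisj : Pairwise (Disjoint on fun n : ℕ => A ∩ Ioo (n * h) (n * h + δ)) := by
    refine (pairwise_disjoint_on _).2 fun m n hmn => Set.disjoint_left.2 ?_
    rintro t ⟨-, -, htm⟩ ⟨-, htn, -⟩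
    have : (m : ℝ) + 1 ≤ n := by exact_mod_cast hmn
    nlinarith
  rw [Finset.sum_congr rfl fun n _ => hblock n,
    ← measure_biUnion_finset (hdisj.set_pairwise _) fun n _ => hA.inter measurableSet_Ioo]
  refine measure_mono (iUnion₂_subset fun n hn => ?_)
  rintro t ⟨htA, htn, htδ⟩
  have : (n : ℝ) + 1 ≤ N := by exact_mod_cast Finset.mem_range.1 hn
  exact ⟨⟨by nlinarith, by nlinarith⟩, htA⟩

theorem liminf_volume_Icc_inter_div_pos {A : Set ℝ} (hA : MeasurableSet A) {h δ : ℝ}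
    (hh : 0 < h) (hδ : 0 < δ)
    (hdens : ∀ s ∈ Ioo 0 δ, 0 < atTop.liminf fun N : ℕ =>
      (((Finset.range N).filter fun n : ℕ => n * h + s ∈ A).card : ℝ≥0∞) / N) :
    0 < atTop.liminf fun N : ℕ => volume (Icc 0 (N * h) ∩ A) / N := by
  -- `ε ≤ h` keeps the blocks `(n * h, n * h + ε)` pairwise disjoint.
  set ε := min δ h
  have hC : ∀ n : ℕ, MeasurableSet ((fun s => n * h + s) ⁻¹' A) :=
    fun n => measurable_const_add _ hA
  have hblocks := liminf_sum_measure_div_pos (μ := volume.restrict (Ioo 0 ε)) hC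
    (E := Ioo 0 ε) (by simp [ε, hδ, hh])
    fun s hs => hdens s ⟨hs.1, hs.2.trans_le (min_le_left _ _)⟩
  refine hblocks.trans_le (liminf_le_liminf (Eventually.of_forall fun N => ?_))
  simp only [Measure.restrict_apply (hC _)]
  gcongr
  exact sum_volume_preimage_add_inter_Ioo_le hA (le_min hδ.le hh.le) (min_le_right _ _) N

theorem limsup_volume_Icc_inter_div_pos {A : Set ℝ} {h : ℝ} (hh : 0 < h)
    (hA : 0 < atTop.liminf fun N : ℕ => volume (Icc 0 (N * h) ∩ A) / N) :
    0 < atTop.limsup fun S : ℝ => (volume (Icc 0 S ∩ A)).toReal / S := by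
  obtain ⟨r, hr, hrA⟩ := ENNReal.lt_iff_exists_nnreal_btwn.1 hA
  have hlow : ∀ᶠ N : ℕ in atTop,
      (r : ℝ) / h ≤ (volume (Icc 0 (N * h) ∩ A)).toReal / (N * h) := by
    filter_upwards [eventually_lt_of_lt_liminf hrA, eventually_gt_atTop 0] with N hN hN0
    have hfin : volume (Icc 0 (N * h) ∩ A) / N ≠ ∞ :=
      ENNReal.div_ne_top (measure_ne_top_of_subset inter_subset_left measure_Icc_lt_top.ne)
        (by exact_mod_cast hN0.ne')
    have hrN := ENNReal.toReal_mono hfin hN.le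
    rw [ENNReal.toReal_div, ENNReal.toReal_natCast, ENNReal.coe_toReal] at hrN
    rw [← div_div]
    gcongr
  have hbdd : IsBoundedUnder (· ≤ ·) atTop fun S : ℝ => (volume (Icc 0 S ∩ A)).toReal / S := by
    refine isBoundedUnder_of_eventually_le (a := 1) ?_
    filter_upwards [eventually_gt_atTop 0] with S hS
    rw [div_le_one hS]
    calc (volume (Icc 0 S ∩ A)).toReal ≤ (volume (Icc 0 S)).toReal :=
          ENNReal.toReal_mono measure_Icc_lt_top.ne (measure_mono inter_subset_left)
      _ = S := by simp [hS.le]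
  calc (0 : ℝ) < r / h := div_pos (NNReal.coe_pos.2 (ENNReal.coe_pos.1 hr)) hh
    _ ≤ _ := le_limsup_of_frequently_le
      ((tendsto_natCast_atTop_atTop.atTop_mul_const hh).frequently hlow.frequently) hbdd

theorem stmt15_general {X : Type*} [TopologicalSpace X] [AddCommGroup X] [Module ℂ X]
    (T : ℝ → X →L[ℂ] X)
    (hT0 : T 0 = 1)
    (hTadd : ∀ t s : ℝ, 0 ≤ t → 0 ≤ s → T (t + s) = (T t).comp (T s))
    (hTcont : ∀ y : X, ContinuousOn (fun t : ℝ => T t y) (Set.Ici 0))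
    (h : ℝ) (hh : 0 < h) (x : X)
    (hfhc : ∀ U : Set X, IsOpen U → U.Nonempty →
      0 < Filter.atTop.liminf (fun N : ℕ =>
        (((Finset.range N).filter (fun n => ((T h) ^ n) x ∈ U)).card : ℝ) / N)) :
    ∀ U : Set X, IsOpen U → U.Nonempty →
      0 < Filter.atTop.limsup (fun S : ℝ =>
        (volume {t : ℝ | t ∈ Set.Icc 0 S ∧ T t x ∈ U}).toReal / S) := by
  rintro U hU ⟨y₀, hy₀⟩
  obtain ⟨δ, hδ, hδU⟩ : ∃ δ > 0, Ioo 0 δ ⊆ (fun s => T s y₀) ⁻¹' U := by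
    have hcont : Tendsto (fun s => T s y₀) (𝓝[>] 0) (𝓝 y₀) := by
      simpa [hT0] using (((hTcont y₀) 0 self_mem_Ici).mono Ioi_subset_Ici_self).tendsto
    exact mem_nhdsGT_iff_exists_Ioo_subset.1 (hcont (hU.mem_nhds hy₀))
  set A := Ioi 0 ∩ (fun t => T t x) ⁻¹' U with hA_def
  clear_value A
  have hA : IsOpen A := hA_def ▸
    ((hTcont x).mono Ioi_subset_Ici_self).isOpen_inter_preimage isOpen_Ioi hU
  have hdens : ∀ s ∈ Ioo 0 δ, 0 < atTop.liminf fun N : ℕ =>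
      (((Finset.range N).filter fun n : ℕ => n * h + s ∈ A).card : ℝ≥0∞) / N := by
    intro s hs
    have hshift : ∀ n : ℕ, (n * h + s ∈ A) = ((T h ^ n) x ∈ T s ⁻¹' U) := by
      intro n
      have hnh : 0 ≤ (n : ℝ) * h := by positivity
      rw [← map_natCast_mul_eq_pow hT0 hTadd hh.le, mem_preimage,
        ← ContinuousLinearMap.comp_apply, ← hTadd _ _ hs.1.le hnh, add_comm]
      simp [hA_def, add_pos_of_pos_of_nonneg hs.1 hnh]
    simp only [hshift]
    exact liminf_natCast_div_pos_of_real (hfhc _ (hU.preimage (T s).continuous) ⟨y₀, hδU hs⟩)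
  have hlattice := liminf_volume_Icc_inter_div_pos hA.measurableSet hh hδ hdens
  refine limsup_volume_Icc_inter_div_pos hh (hlattice.trans_le (liminf_le_liminf ?_))
  filter_upwards with N
  gcongr
  rw [hA_def]
  exact fun t ht => ⟨ht.1, ht.2.2⟩

/-- If `𝒯 = (T_t)_{t≥0}` is a `C₀`-semigroup on a topological vector space `X`, `h > 0` and
`x` is a frequently hypercyclic vector for the single operator `T h`, then `x` is a
frequently hypercyclic vector for `𝒯` with respect to upper density: for every nonempty
open `U`, `limsup_{T→∞} (1/T)·meas{t ∈ [0,T] : T_t x ∈ U} > 0`. -/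
theorem stmt15 {X : Type*} [TopologicalSpace X] [AddCommGroup X] [Module ℂ X]
    [IsTopologicalAddGroup X] [ContinuousSMul ℂ X]
    (T : ℝ → X →L[ℂ] X)
    (hT0 : T 0 = 1)
    (hTadd : ∀ t s : ℝ, 0 ≤ t → 0 ≤ s → T (t + s) = (T t).comp (T s))
    (hTcont : ∀ y : X, ContinuousOn (fun t : ℝ => T t y) (Set.Ici 0))
    (h : ℝ) (hh : 0 < h) (x : X)
    (hfhc : ∀ U : Set X, IsOpen U → U.Nonempty →
      0 < Filter.atTop.liminf (fun N : ℕ =>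
        (((Finset.range N).filter (fun n => ((T h) ^ n) x ∈ U)).card : ℝ) / N)) :
    ∀ U : Set X, IsOpen U → U.Nonempty →
      0 < Filter.atTop.limsup (fun S : ℝ =>
        (volume {t : ℝ | t ∈ Set.Icc 0 S ∧ T t x ∈ U}).toReal / S) :=
  stmt15_general T hT0 hTadd hTcont h hh x hfhc
end

section
/- Let X be a second countable topological space, (T_t)_{t≥0} a family of maps on X with T_{t}∘T_{s} = T_{t+s}, T₀ = id, and such that for each x, t ↦ T_t x is continuous. Fix x ∈ X with dense orbit {T_t x : t ≥ 0}, and suppose that for every nonempty open U the set {t ≥ 0 : T_t x ∈ U} is unbounded. Then the set J = {τ > 0 : the discrete orbit {T_{nτ} x : n ∈ ℕ} is dense in X} is a dense G_δ subset of (0,∞). -/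
/-- Let `X` be second countable, `(T_t)_{t≥0}` a semigroup of maps with `t ↦ T_t x`
continuous, and `x` a point with dense orbit whose hitting time set of every nonempty open
set is unbounded. Then `J = {τ > 0 : the discrete orbit (T_{nτ} x)_{n ∈ ℕ} is dense}` is a
dense `G_δ` subset of `(0, ∞)`. -/
theorem stmt19 {X : Type*} [TopologicalSpace X] [SecondCountableTopology X]
    (T : ℝ → X → X)
    (hT0 : T 0 = id)
    (hTadd : ∀ t s : ℝ, 0 ≤ t → 0 ≤ s → T (t + s) = T t ∘ T s)
    (hTcont : ∀ y : X, ContinuousOn (fun t : ℝ => T t y) (Set.Ici 0))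
    (x : X) (hdense : Dense {y : X | ∃ t : ℝ, 0 ≤ t ∧ T t x = y})
    (hunbdd : ∀ U : Set X, IsOpen U → U.Nonempty → ¬ BddAbove {t : ℝ | 0 ≤ t ∧ T t x ∈ U}) :
    IsGδ {τ : ℝ | 0 < τ ∧ Dense (Set.range fun n : ℕ => T ((n : ℝ) * τ) x)} ∧
      Set.Ioi (0 : ℝ) ⊆
        closure {τ : ℝ | 0 < τ ∧ Dense (Set.range fun n : ℕ => T ((n : ℝ) * τ) x)} := by
  classical
  obtain ⟨B, hBc, -, hB⟩ := TopologicalSpace.exists_countable_basis X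
  set S : Set X → Set ℝ := fun U => {τ : ℝ | 0 < τ ∧ ∃ n : ℕ, T ((n : ℝ) * τ) x ∈ U} with hS
  -- openness of S U
  have hSopen : ∀ U : Set X, IsOpen U → IsOpen (S U) := by
    intro U hU
    have hW : IsOpen (Set.Ioi (0:ℝ) ∩ (fun t => T t x) ⁻¹' U) :=
      ((hTcont x).mono Set.Ioi_subset_Ici_self).isOpen_inter_preimage isOpen_Ioi hU
    have heq : S U = ⋃ n : ℕ, {τ : ℝ | 0 < τ ∧ T ((n : ℝ) * τ) x ∈ U} := by
      ext τ
      simp only [hS, Set.mem_setOf_eq, Set.mem_iUnion]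
      tauto
    rw [heq]
    apply isOpen_iUnion
    intro n
    rcases Nat.eq_zero_or_pos n with h0 | hpos
    · subst h0
      simp only [Nat.cast_zero, zero_mul]
      by_cases hx0 : T 0 x ∈ U
      · simp only [hx0, and_true]
        exact isOpen_Ioi
      · simp only [hx0, and_false, Set.setOf_false]
        exact isOpen_empty
    · have hn : (0:ℝ) < (n : ℝ) := by exact_mod_cast hpos
      have : {τ : ℝ | 0 < τ ∧ T ((n : ℝ) * τ) x ∈ U}
          = (fun τ : ℝ => (n : ℝ) * τ) ⁻¹' (Set.Ioi (0:ℝ) ∩ (fun t => T t x) ⁻¹' U) := by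
        ext τ
        constructor
        · rintro ⟨h1, h2⟩; exact ⟨mul_pos hn h1, h2⟩
        · rintro ⟨h1, h2⟩
          refine ⟨?_, h2⟩
          have h1' : (0:ℝ) < (n : ℝ) * τ := h1
          by_contra hle
          push_neg at hle
          nlinarith
      rw [this]
      exact hW.preimage (continuous_const.mul continuous_id)
  -- core density lemma
  have hcore : ∀ U : Set X, IsOpen U → U.Nonempty → ∀ a b : ℝ, 0 < a → a < b →
      ∃ τ, τ ∈ Set.Ioo a b ∧ τ ∈ S U := by
    intro U hU hUne a b ha hab
    obtain ⟨s, ⟨hs0, hsU⟩, hsM⟩ := not_bddAbove_iff.mp (hunbdd U hU hUne) (a * b / (b - a))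
    have hba : (0:ℝ) < b - a := sub_pos.mpr hab
    have hb : (0:ℝ) < b := ha.trans hab
    have habpos : (0:ℝ) < a * b / (b - a) := by positivity
    have hspos : (0:ℝ) < s := habpos.trans hsM
    set n : ℕ := ⌊s / b⌋₊ + 1 with hn
    have hnpos : (0:ℝ) < (n : ℝ) := by positivity
    have h1 : s / b < (n : ℝ) := by
      have := Nat.lt_floor_add_one (s / b)
      push_cast [hn]
      push_cast at this
      linarith
    have hkey : s / b + 1 < s / a := by
      rw [div_add' _ _ _ hb.ne', div_lt_div_iff₀ hb ha]
      have : a * b < s * (b - a) := by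
        rw [div_lt_iff₀ hba] at hsM
        linarith
      nlinarith
    have h2 : (n : ℝ) < s / a := by
      have hf : ((⌊s / b⌋₊ : ℕ) : ℝ) ≤ s / b := Nat.floor_le (by positivity)
      push_cast [hn]
      linarith
    have hna : a * n < s := by
      rw [lt_div_iff₀ ha] at h2; linarith [h2]
    have hnb : s < b * n := by
      rw [div_lt_iff₀ hb] at h1; linarith [h1]
    refine ⟨s / n, ⟨?_, ?_⟩, ?_, n, ?_⟩
    · rw [lt_div_iff₀ hnpos]; linarith
    · rw [div_lt_iff₀ hnpos]; linarith
    · positivity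
    · have hns : (n : ℝ) * (s / n) = s := by field_simp
      rw [hns]; exact hsU
  -- density of S U ∪ Iio 0
  have hSdense : ∀ U : Set X, IsOpen U → U.Nonempty → Dense (S U ∪ Set.Iio 0) := by
    intro U hU hUne τ
    rcases le_or_gt τ 0 with h | h
    · apply closure_mono Set.subset_union_right
      rw [closure_Iio]; exact h
    · rw [mem_closure_iff_nhds]
      intro V hV
      obtain ⟨l, u, ⟨hl, hu⟩, hluV⟩ := mem_nhds_iff_exists_Ioo_subset.mp hV
      have ha : (0:ℝ) < max l (τ / 2) := lt_max_of_lt_right (by linarith)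
      have hau : max l (τ / 2) < u := max_lt (by linarith) (by linarith)
      obtain ⟨τ', hτ', hτ'S⟩ := hcore U hU hUne (max l (τ / 2)) u ha hau
      exact ⟨τ', hluV ⟨lt_of_le_of_lt (le_max_left _ _) hτ'.1, hτ'.2⟩, Or.inl hτ'S⟩
  set B' := {U ∈ B | U.Nonempty} with hB'
  have hB'c : B'.Countable := hBc.mono (Set.sep_subset _ _)
  set J := {τ : ℝ | 0 < τ ∧ Dense (Set.range fun n : ℕ => T ((n : ℝ) * τ) x)} with hJ
  have hJeq : J = Set.Ioi 0 ∩ ⋂ U ∈ B', S U := by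
    ext τ
    simp only [hJ, hB', Set.mem_setOf_eq, Set.mem_inter_iff, Set.mem_Ioi, Set.mem_iInter,
      Set.mem_sep_iff, hS]
    constructor
    · rintro ⟨hτ, hd⟩
      refine ⟨hτ, fun U hU => ?_⟩
      obtain ⟨y, hy1, n, hy2⟩ := hB.dense_iff.mp hd U hU.1 hU.2
      have hy2' : T ((n : ℝ) * τ) x = y := hy2
      exact ⟨hτ, n, hy2' ▸ hy1⟩
    · rintro ⟨hτ, h⟩
      refine ⟨hτ, hB.dense_iff.mpr fun U hUB hUne => ?_⟩
      obtain ⟨-, n, hn⟩ := h U ⟨hUB, hUne⟩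
      exact ⟨_, hn, n, rfl⟩
  constructor
  · rw [hJeq]
    exact isOpen_Ioi.isGδ.inter
      (IsGδ.biInter hB'c fun U hU => (hSopen U (hB.isOpen hU.1)).isGδ)
  · have hDd : Dense (⋂ U ∈ B', (S U ∪ Set.Iio 0)) := by
      apply dense_biInter_of_isOpen
      · intro U hU; exact (hSopen U (hB.isOpen hU.1)).union isOpen_Iio
      · exact hB'c
      · intro U hU; exact hSdense U (hB.isOpen hU.1) hU.2
    have hJeq2 : J = Set.Ioi 0 ∩ ⋂ U ∈ B', (S U ∪ Set.Iio 0) := by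
      rw [hJeq]
      ext τ
      simp only [Set.mem_inter_iff, Set.mem_Ioi, Set.mem_iInter, Set.mem_union, Set.mem_Iio]
      constructor
      · rintro ⟨hτ, h⟩; exact ⟨hτ, fun U hU => Or.inl (h U hU)⟩
      · rintro ⟨hτ, h⟩
        refine ⟨hτ, fun U hU => ?_⟩
        rcases h U hU with h' | h'
        · exact h'
        · linarith
    intro τ hτ
    rw [hJeq2, mem_closure_iff]
    intro o ho hτo
    obtain ⟨y, ⟨hy1, hy2⟩, hy3⟩ :=
      hDd.inter_open_nonempty (o ∩ Set.Ioi 0) (ho.inter isOpen_Ioi) ⟨τ, hτo, hτ⟩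
    exact ⟨y, hy1, hy2, hy3⟩
end
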